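/- arXiv:2009.01281 — 3 statements merged into one kernel-verified Lean document; each statement's English description precedes it below -/
import Mathlib

section
/- Let A ⊆ F_q with |A| = n, partitioned into parts A_1, ..., A_m each of size ℓ+1, and let g ∈ F_q[X] of degree ℓ+1 be constant on each part A_j. For k divisible by ℓ, the Tamo–Barg code C = {(f(a))_{a ∈ A} : f = ∑_{i=0}^{ℓ-1} ∑_{j=0}^{k/ℓ - 1} a_{ij} X^i g(X)^j} has minimum distance at least n - k - k/ℓ + 2. -/
open Polynomial

/-- Tamo–Barg codes: with `A ⊆ F_q` of size `n` partitioned into parts `P j` of size `ℓ + 1`,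
`g` a polynomial of degree `ℓ + 1` constant on each part, `ℓ ∣ k`, every codeword
`(f(a))_{a ∈ A}` with `f = ∑_{i<ℓ} ∑_{j<k/ℓ} a_{ij} Xⁱ gʲ` that is nonzero has Hamming weight
at least `n - k - k/ℓ + 2`; i.e. the minimum distance is at least `n - k - k/ℓ + 2`. -/
theorem tamoBarg_minDist_lower_bound {F : Type*} [Field F] [DecidableEq F] {n m ℓ k : ℕ}
    (A : Finset F) (hAn : A.card = n)
    (P : Fin m → Finset F)
    (hcover : ∀ a, a ∈ A ↔ ∃ j, a ∈ P j)
    (hdisj : ∀ j j' : Fin m, j ≠ j' → Disjoint (P j) (P j'))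
    (hPcard : ∀ j, (P j).card = ℓ + 1)
    (g : Polynomial F) (hg : g.natDegree = ℓ + 1)
    (hconst : ∀ j, ∀ a ∈ P j, ∀ b ∈ P j, g.eval a = g.eval b)
    (hℓ : 0 < ℓ) (hdvd : ℓ ∣ k) (hkn : k + k / ℓ ≤ n)
    (coef : ℕ → ℕ → F) :
    (∃ a ∈ A, (∑ i ∈ Finset.range ℓ, ∑ j ∈ Finset.range (k / ℓ),
        C (coef i j) * X ^ i * g ^ j).eval a ≠ 0) →
      n - k - k / ℓ + 2 ≤ (A.filter fun a =>
        (∑ i ∈ Finset.range ℓ, ∑ j ∈ Finset.range (k / ℓ),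
          C (coef i j) * X ^ i * g ^ j).eval a ≠ 0).card := by
  intro ⟨a, ha, hne⟩
  obtain ⟨q, rfl⟩ := hdvd
  have hq : ℓ * q / ℓ = q := Nat.mul_div_cancel_left q hℓ
  rw [hq] at hne hkn ⊢
  set f : Polynomial F := ∑ i ∈ Finset.range ℓ, ∑ j ∈ Finset.range q,
      C (coef i j) * X ^ i * g ^ j with hf
  -- q positive, else f = 0
  rcases Nat.eq_zero_or_pos q with hq0 | hq0
  · subst hq0
    simp [hf] at hne
  have hfne : f ≠ 0 := fun h => hne (by rw [h]; simp)
  -- degree bound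
  have hdeg : f.natDegree ≤ ℓ * q + q - 2 := by
    apply Polynomial.natDegree_sum_le_of_forall_le
    intro i hi
    apply Polynomial.natDegree_sum_le_of_forall_le
    intro j hj
    simp only [Finset.mem_range] at hi hj
    obtain ⟨s, rfl⟩ : ∃ s, ℓ = s + 1 := ⟨ℓ - 1, by omega⟩
    obtain ⟨t, rfl⟩ : ∃ t, q = t + 1 := ⟨q - 1, by omega⟩
    calc (C (coef i j) * X ^ i * g ^ j).natDegree
        ≤ (C (coef i j) * X ^ i).natDegree + (g ^ j).natDegree :=
          Polynomial.natDegree_mul_le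
      _ ≤ i + j * (s + 1 + 1) := by
          gcongr
          · calc (C (coef i j) * X ^ i).natDegree
                ≤ (C (coef i j)).natDegree + (X ^ i : Polynomial F).natDegree :=
                  Polynomial.natDegree_mul_le
              _ ≤ i := by simp
          · calc (g ^ j).natDegree ≤ j * g.natDegree := Polynomial.natDegree_pow_le
              _ = j * (s + 1 + 1) := by rw [hg]
      _ ≤ s + t * (s + 1 + 1) := by gcongr <;> omega
      _ ≤ (s + 1) * (t + 1) + (t + 1) - 2 := by
          have h1 : (s + 1) * (t + 1) + (t + 1) = s + t * (s + 1 + 1) + 2 := by ring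
          omega
  -- zeros of f in A are at most natDegree
  have hzero : (A.filter fun a => f.eval a = 0).card ≤ ℓ * q + q - 2 := by
    refine le_trans ?_ (le_trans (Multiset.toFinset_card_le f.roots)
      (le_trans f.card_roots' hdeg))
    apply Finset.card_le_card
    intro x hx
    simp only [Finset.mem_filter, Multiset.mem_toFinset, Polynomial.mem_roots hfne,
      Polynomial.IsRoot] at hx ⊢
    exact hx.2
  have hsplit : (A.filter fun a => f.eval a ≠ 0).card
      + (A.filter fun a => f.eval a = 0).card = n := by
    have h := Finset.card_filter_add_card_filter_not (s := A)
      (p := fun a => f.eval a ≠ 0)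
    simp only [ne_eq, not_not] at h
    rw [hAn] at h
    exact h
  have hℓq2 : 2 ≤ ℓ * q + q := by
    have : ℓ ≤ ℓ * q := Nat.le_mul_of_pos_right ℓ hq0
    omega
  omega
end

section
/- With notation as in the Tamo–Barg construction: for any a ∈ A_j, the restriction of any evaluated function f = ∑_{i<ℓ, j'<k/ℓ} a_{i j'} X^i g(X)^{j'} to the part A_j containing a agrees with a polynomial of degree < ℓ (obtained by substituting the constant value γ_j of g on A_j); hence the code has locality ℓ: each symbol f(a) is determined by the ℓ values {f(b) : b ∈ A_j, b ≠ a} via Lagrange interpolation. -/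
open Polynomial

private lemma tamoBarg_aux {F : Type*} [Field F] {m ℓ k : ℕ}
    (P : Fin m → Finset F)
    (hPcard : ∀ j, (P j).card = ℓ + 1)
    (g : Polynomial F)
    (hconst : ∀ j, ∀ a ∈ P j, ∀ b ∈ P j, g.eval a = g.eval b)
    (coef : ℕ → ℕ → F) (j : Fin m) :
    ∃ p : Polynomial F, p.degree < (ℓ : ℕ) ∧ ∀ a ∈ P j,
      (∑ i ∈ Finset.range ℓ, ∑ j' ∈ Finset.range (k / ℓ),
        C (coef i j') * X ^ i * g ^ j').eval a = p.eval a := by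
  have hne : (P j).Nonempty := Finset.card_pos.mp (by rw [hPcard j]; omega)
  obtain ⟨a₀, ha₀⟩ := hne
  set γ := g.eval a₀ with hγ
  refine ⟨∑ i : Fin ℓ, C (∑ j' ∈ Finset.range (k / ℓ), coef i j' * γ ^ j') * X ^ (i : ℕ),
    Polynomial.degree_sum_fin_lt _, ?_⟩
  intro a ha
  have hg : g.eval a = γ := hconst j a ha a₀ ha₀
  rw [Fin.sum_univ_eq_sum_range (fun i => C (∑ j' ∈ Finset.range (k / ℓ),
    coef i j' * γ ^ j') * X ^ i)]
  simp only [eval_finset_sum, eval_mul, eval_pow, eval_C, eval_X, hg, Finset.sum_mul]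
  exact Finset.sum_congr rfl fun i _ => Finset.sum_congr rfl fun j' _ => by ring

/-- Locality of Tamo–Barg codes: the restriction of
`f = ∑_{i<ℓ} ∑_{j'<k/ℓ} a_{ij'} Xⁱ g^{j'}` to any part `P j` of the partition agrees with a
polynomial of degree `< ℓ` (substitute the constant value of `g` on `P j`); consequently for
each `a ∈ P j` the symbol `f(a)` is determined by the `ℓ` values of `f` at the other points
of `P j`. -/
theorem tamoBarg_locality {F : Type*} [Field F] {m ℓ k : ℕ}
    (P : Fin m → Finset F)
    (hPcard : ∀ j, (P j).card = ℓ + 1)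
    (g : Polynomial F) (hg : g.natDegree = ℓ + 1)
    (hconst : ∀ j, ∀ a ∈ P j, ∀ b ∈ P j, g.eval a = g.eval b)
    (coef coef' : ℕ → ℕ → F) :
    ∀ j : Fin m,
      (∃ p : Polynomial F, p.degree < (ℓ : ℕ) ∧ ∀ a ∈ P j,
        (∑ i ∈ Finset.range ℓ, ∑ j' ∈ Finset.range (k / ℓ),
          C (coef i j') * X ^ i * g ^ j').eval a = p.eval a)
      ∧ ∀ a ∈ P j,
        (∀ b ∈ P j, b ≠ a →
          (∑ i ∈ Finset.range ℓ, ∑ j' ∈ Finset.range (k / ℓ),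
            C (coef i j') * X ^ i * g ^ j').eval b
          = (∑ i ∈ Finset.range ℓ, ∑ j' ∈ Finset.range (k / ℓ),
            C (coef' i j') * X ^ i * g ^ j').eval b) →
        (∑ i ∈ Finset.range ℓ, ∑ j' ∈ Finset.range (k / ℓ),
          C (coef i j') * X ^ i * g ^ j').eval a
        = (∑ i ∈ Finset.range ℓ, ∑ j' ∈ Finset.range (k / ℓ),
          C (coef' i j') * X ^ i * g ^ j').eval a := by
  classical
  intro j
  obtain ⟨p, hpd, hp⟩ := tamoBarg_aux (k := k) P hPcard g hconst coef j
  obtain ⟨p', hpd', hp'⟩ := tamoBarg_aux (k := k) P hPcard g hconst coef' j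
  refine ⟨⟨p, hpd, hp⟩, ?_⟩
  intro a ha hagree
  have hcard : ((P j).erase a).card = ℓ := by
    rw [Finset.card_erase_of_mem ha, hPcard j]; omega
  have hpp' : p = p' := by
    apply Polynomial.eq_of_degrees_lt_of_eval_finset_eq ((P j).erase a)
      (by rw [hcard]; exact hpd) (by rw [hcard]; exact hpd')
    intro x hx
    have hxP := Finset.mem_of_mem_erase hx
    rw [← hp x hxP, ← hp' x hxP]
    exact hagree x hxP (Finset.ne_of_mem_erase hx)
  rw [hp a ha, hp' a ha, hpp']
end

section
/- Let C ⊆ F_q^n be an [n, k, d] linear code admitting a partition of {1,...,n} into parts of size ℓ+1 such that on each part the restriction of C has a parity check (local recoverability with disjoint recovery sets of locality ℓ). If C is the Tamo–Barg code with parameters as above, then d = n - k - k/ℓ + 2, i.e., C meets the Singleton-type bound d ≤ n - k - ⌈k/ℓ⌉ + 2 for locally recoverable codes with equality. -/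
open Polynomial

/-- The minimum (Hamming) distance of a linear code. -/
noncomputable def minDist {F : Type*} {ι : Type*} [Fintype ι] [Field F] [DecidableEq F]
    (C : Submodule F (ι → F)) : ℕ :=
  sInf {w | ∃ c ∈ C, c ≠ 0 ∧ hammingNorm c = w}

/-- Evaluation at the points of a finite set `A ⊆ F`, as a linear map on polynomials. -/
noncomputable def evalOn {F : Type*} [Field F] (A : Finset F) :
    Polynomial F →ₗ[F] (↥A → F) :=
  LinearMap.pi fun a : ↥A => (Polynomial.aeval (a : F)).toLinearMap

/-- The space of functions evaluated in the Tamo–Barg construction: the span of the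
monomials `Xⁱ gʲ` for `i < ℓ`, `j < k/ℓ`. -/
noncomputable def tbSpace {F : Type*} [Field F] (ℓ k : ℕ) (g : Polynomial F) :
    Submodule F (Polynomial F) :=
  Submodule.span F {p | ∃ i < ℓ, ∃ j < k / ℓ, p = X ^ i * g ^ j}

/-!
Every polynomial of `tbSpace ℓ k g` has degree at most `(ℓ - 1) + (k/ℓ - 1)(ℓ + 1) = k + k/ℓ - 2`,
so a nonzero codeword vanishes at no more than `k + k/ℓ - 2` points of `A`. The bound is attained:
if `c j` is the value of `g` on the part `P j`, then `∏_{j ∈ J} (g - c j)` vanishes on the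
`k/ℓ - 1` parts indexed by `J`, and multiplying it by `∏_{a ∈ S} (X - a)` for `ℓ - 1` points `S`
of one further part adds `ℓ - 1` zeros while staying in the span of the `Xⁱ gʲ`.
-/

open Finset

section

variable {F : Type*} [Field F]

lemma minDist_eq_of_forall_le {ι : Type*} [Fintype ι] [DecidableEq F]
    {C : Submodule F (ι → F)} {d : ℕ} (hle : ∀ c ∈ C, c ≠ 0 → d ≤ hammingNorm c)
    (hex : ∃ c ∈ C, c ≠ 0 ∧ hammingNorm c ≤ d) : minDist C = d := by
  obtain ⟨c, hc, hc0, hcd⟩ := hex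
  have hmem : hammingNorm c ∈ {w | ∃ c ∈ C, c ≠ 0 ∧ hammingNorm c = w} := ⟨c, hc, hc0, rfl⟩
  refine le_antisymm ((Nat.sInf_le hmem).trans hcd) (le_csInf ⟨_, hmem⟩ ?_)
  rintro _ ⟨c', hc', hc'0, rfl⟩
  exact hle c' hc' hc'0

lemma hammingNorm_evalOn_add_card_roots [DecidableEq F] (A : Finset F) (p : F[X]) :
    hammingNorm (evalOn A p) + #{a ∈ A | p.eval a = 0} = #A := by
  have hnorm : hammingNorm (evalOn A p) = #{a ∈ A | p.eval a ≠ 0} := by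
    have heval : ∀ a : A, evalOn A p a = p.eval ↑a := fun a => by simp [evalOn]
    simp only [hammingNorm, heval]
    rw [univ_eq_attach, filter_attach (fun a => p.eval a ≠ 0), card_map, card_attach]
  rw [hnorm, add_comm]
  simp only [ne_eq, card_filter_add_card_filter_not]

lemma card_sub_natDegree_le_hammingNorm_evalOn [DecidableEq F] (A : Finset F) {p : F[X]}
    (hp : p ≠ 0) : #A - p.natDegree ≤ hammingNorm (evalOn A p) := by
  have hroots : #{a ∈ A | p.eval a = 0} ≤ p.natDegree :=
    card_le_degree_of_subset_roots fun a ha => by simp_all [mem_roots hp]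
  have := hammingNorm_evalOn_add_card_roots A p
  omega

lemma hammingNorm_evalOn_le_of_subset [DecidableEq F] {A Z : Finset F} (hZA : Z ⊆ A) {p : F[X]}
    (hZ : ∀ a ∈ Z, p.eval a = 0) : hammingNorm (evalOn A p) ≤ #A - #Z := by
  have : #Z ≤ #{a ∈ A | p.eval a = 0} := card_le_card fun a ha => mem_filter.2 ⟨hZA ha, hZ a ha⟩
  have := hammingNorm_evalOn_add_card_roots A p
  omega

lemma natDegree_le_of_mem_tbSpace {ℓ k : ℕ} {g : F[X]} (hg : g.natDegree ≤ ℓ + 1) {p : F[X]}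
    (hp : p ∈ tbSpace ℓ k g) : p.natDegree ≤ ℓ - 1 + (k / ℓ - 1) * (ℓ + 1) := by
  suffices tbSpace ℓ k g ≤ degreeLE F ↑(ℓ - 1 + (k / ℓ - 1) * (ℓ + 1)) from
    natDegree_le_iff_degree_le.2 (mem_degreeLE.1 (this hp))
  refine Submodule.span_le.2 ?_
  rintro _ ⟨i, hi, j, hj, rfl⟩
  rw [SetLike.mem_coe, mem_degreeLE, ← natDegree_le_iff_degree_le]
  calc (X ^ i * g ^ j).natDegree ≤ i + j * (ℓ + 1) :=
        natDegree_mul_le.trans (add_le_add (natDegree_X_pow_le i) (natDegree_pow_le_of_le j hg))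
    _ ≤ ℓ - 1 + (k / ℓ - 1) * (ℓ + 1) := add_le_add (by omega) (Nat.mul_le_mul_right _ (by omega))

lemma mul_aeval_mem_tbSpace {ℓ k : ℕ} (g : F[X]) {q r : F[X]} (hq : q.natDegree < ℓ)
    (hr : r.natDegree < k / ℓ) : q * aeval g r ∈ tbSpace ℓ k g := by
  rw [q.as_sum_range' ℓ hq, aeval_eq_sum_range' hr, sum_mul_sum]
  refine Submodule.sum_mem _ fun i hi => Submodule.sum_mem _ fun j hj => ?_
  rw [← smul_X_eq_monomial, smul_mul_smul]
  exact Submodule.smul_mem _ _ (Submodule.subset_span ⟨i, mem_range.1 hi, j, mem_range.1 hj, rfl⟩)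

lemma exists_mem_tbSpace_eval_eq_zero {ι : Type*} [DecidableEq F] {ℓ k : ℕ} {g : F[X]}
    (hg : 0 < g.natDegree) {P : ι → Finset F} {c : ι → F} (hc : ∀ j, ∀ a ∈ P j, g.eval a = c j)
    {J : Finset ι} (hJ : #J < k / ℓ) {S : Finset F} (hS : #S < ℓ) :
    ∃ f ∈ tbSpace ℓ k g, f ≠ 0 ∧ ∀ a ∈ S ∪ J.biUnion P, f.eval a = 0 := by
  have hG : aeval g (∏ j ∈ J, (X - C (c j))) = ∏ j ∈ J, (g - C (c j)) := by
    simp [map_prod, algebraMap_eq]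
  have hfac : ∀ j, g - C (c j) ≠ 0 := fun j h => by
    have := natDegree_sub_C (p := g) (a := c j)
    rw [h, natDegree_zero] at this
    omega
  refine ⟨(∏ a ∈ S, (X - C a)) * aeval g (∏ j ∈ J, (X - C (c j))),
    mul_aeval_mem_tbSpace g (by simpa) (by simpa), ?_, ?_⟩
  · rw [hG]
    exact mul_ne_zero (prod_ne_zero_iff.2 fun a _ => X_sub_C_ne_zero a)
      (prod_ne_zero_iff.2 fun j _ => hfac j)
  · intro a ha
    rw [hG, eval_mul, eval_prod, eval_prod]
    rcases mem_union.1 ha with haS | haP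
    · rw [prod_eq_zero haS (by simp), zero_mul]
    · obtain ⟨j, hj, haj⟩ := mem_biUnion.1 haP
      rw [prod_eq_zero hj (by simp [hc j a haj]), mul_zero]

lemma exists_mem_tbSpace_card_roots {ι : Type*} [Fintype ι] [DecidableEq F] {ℓ k : ℕ}
    {P : ι → Finset F} (hdisj : ∀ j j' : ι, j ≠ j' → Disjoint (P j) (P j'))
    (hPcard : ∀ j, #(P j) = ℓ + 1) {g : F[X]} (hg : 0 < g.natDegree)
    (hconst : ∀ j, ∀ a ∈ P j, ∀ b ∈ P j, g.eval a = g.eval b)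
    {s r : ℕ} (hs : s < ℓ) (hr : r < k / ℓ) (hrι : r < Fintype.card ι) :
    ∃ f ∈ tbSpace ℓ k g, f ≠ 0 ∧
      ∃ Z ⊆ univ.biUnion P, #Z = s + r * (ℓ + 1) ∧ ∀ a ∈ Z, f.eval a = 0 := by
  classical
  have hval : ∀ j, ∃ c, ∀ a ∈ P j, g.eval a = c := fun j =>
    (P j).eq_empty_or_nonempty.elim (fun h => ⟨0, by simp [h]⟩)
      fun ⟨b, hb⟩ => ⟨g.eval b, fun a ha => hconst j a ha b hb⟩
  choose c hc using hval
  obtain ⟨j₀⟩ : Nonempty ι := Fintype.card_pos_iff.1 (by omega)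
  obtain ⟨J, hJ, hJcard⟩ := exists_subset_card_eq (s := univ.erase j₀) (n := r)
    (by rw [card_erase_of_mem (mem_univ _), card_univ]; omega)
  obtain ⟨S, hS, hScard⟩ := exists_subset_card_eq (s := P j₀) (n := s) (by rw [hPcard]; omega)
  obtain ⟨f, hf, hf0, hfZ⟩ := exists_mem_tbSpace_eval_eq_zero hg hc (hJcard ▸ hr) (hScard ▸ hs)
  refine ⟨f, hf, hf0, S ∪ J.biUnion P, ?_, ?_, hfZ⟩
  · exact union_subset (hS.trans (subset_biUnion_of_mem P (mem_univ j₀)))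
      (biUnion_subset_biUnion_of_subset_left P (subset_univ J))
  · have hSJ : Disjoint S (J.biUnion P) := (disjoint_biUnion_right _ _ _).2 fun j hj =>
      (hdisj j₀ j (ne_of_mem_erase (hJ hj)).symm).mono_left hS
    rw [card_union_of_disjoint hSJ, card_biUnion fun i _ j _ => hdisj i j]
    simp [hPcard, hScard, hJcard]

end

/-- Optimality of Tamo–Barg codes: the `[n, k]` Tamo–Barg code of locality `ℓ` has minimum
distance exactly `n - k - k/ℓ + 2`, i.e. it attains the Gopalan–Huang–Simitci bound
`d ≤ n - k - ⌈k/ℓ⌉ + 2` for locally recoverable codes with equality. -/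
theorem tamoBarg_optimal {F : Type*} [Field F] [DecidableEq F] {n m ℓ k : ℕ}
    (A : Finset F) (hAn : A.card = n)
    (P : Fin m → Finset F)
    (hcover : ∀ a, a ∈ A ↔ ∃ j, a ∈ P j)
    (hdisj : ∀ j j' : Fin m, j ≠ j' → Disjoint (P j) (P j'))
    (hPcard : ∀ j, (P j).card = ℓ + 1)
    (g : Polynomial F) (hg : g.natDegree = ℓ + 1)
    (hconst : ∀ j, ∀ a ∈ P j, ∀ b ∈ P j, g.eval a = g.eval b)
    (hℓ : 0 < ℓ) (hdvd : ℓ ∣ k) (hk0 : 0 < k) (hkn : k + k / ℓ ≤ n) :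
    minDist (Submodule.map (evalOn A) (tbSpace ℓ k g)) = n - k - k / ℓ + 2 := by
  set t := k / ℓ
  have hk : ℓ * t = k := Nat.mul_div_cancel' hdvd
  have ht : 0 < t := Nat.div_pos (Nat.le_of_dvd hk0 hdvd) hℓ
  have hA : A = univ.biUnion P := by ext a; simp [hcover a]
  have hn : n = m * (ℓ + 1) := by
    rw [← hAn, hA, card_biUnion fun i _ j _ => hdisj i j]
    simp [hPcard]
  have hkt : k + t = t * (ℓ + 1) := by rw [← hk]; ring
  have hD : ℓ - 1 + (t - 1) * (ℓ + 1) + 2 = k + t := by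
    rw [hkt, Nat.sub_one_mul]
    have := Nat.le_mul_of_pos_left (ℓ + 1) ht
    omega
  have htm : t ≤ m := Nat.le_of_mul_le_mul_right (by rw [← hkt, ← hn]; omega) (Nat.succ_pos ℓ)
  obtain ⟨f, hf, hf0, Z, hZ, hZcard, hfZ⟩ := exists_mem_tbSpace_card_roots hdisj hPcard
    (k := k) (by omega) hconst (s := ℓ - 1) (r := t - 1) (by omega) (by omega) (by simp; omega)
  have hlow : ∀ p ∈ tbSpace ℓ k g, p ≠ 0 → n - k - t + 2 ≤ hammingNorm (evalOn A p) := by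
    intro p hp hp0
    have hdeg : p.natDegree ≤ ℓ - 1 + (t - 1) * (ℓ + 1) := natDegree_le_of_mem_tbSpace hg.le hp
    have := card_sub_natDegree_le_hammingNorm_evalOn A hp0
    omega
  apply minDist_eq_of_forall_le
  · rintro _ ⟨p, hp, rfl⟩ hp0
    exact hlow p hp (by rintro rfl; exact hp0 (map_zero _))
  · refine ⟨evalOn A f, Submodule.mem_map_of_mem hf, ?_, ?_⟩
    · exact hammingNorm_pos_iff.1 (by have := hlow f hf hf0; omega)
    · have := hammingNorm_evalOn_le_of_subset (hA ▸ hZ) hfZ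
      omega
end
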